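/- If f : ℝ^k → ℂ is measurable and κ_η(f) < ∞ for some η > k, then the theta series converges absolutely at every point: for all x ∈ ℝ, y > 0, φ ∈ ℝ, and ξ₁, ξ₂ ∈ ℝ^k, the family n ↦ f_φ((n − ξ₂)√y) e(½‖n − ξ₂‖² x + n·ξ₁), indexed by n ∈ ℤ^k, is absolutely summable. -/

import Mathlib

open scoped RealInnerProductSpace
open MeasureTheory
open scoped ENNReal Classical

/-- ℝ^k as a Euclidean space. -/
abbrev E (k : ℕ) := EuclideanSpace ℝ (Fin k)

/-- `e(t) = exp(2πit)`. -/
noncomputable def e (t : ℝ) : ℂ := Complex.exp (2 * Real.pi * Complex.I * t)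

/-- `f_φ := R(k_φ)f`: equal to `f` when `φ ≡ 0 (mod 2π)`, to `w ↦ f(−w)` when
`φ ≡ π (mod 2π)`, and given by the oscillatory integral otherwise. -/
noncomputable def fphi {k : ℕ} (f : E k → ℂ) (φ : ℝ) : E k → ℂ :=
  fun w =>
    if ∃ m : ℤ, φ = 2 * Real.pi * m then f w
    else if ∃ m : ℤ, φ = Real.pi + 2 * Real.pi * m then f (-w)
    else ((|Real.sin φ| ^ (-(k : ℝ) / 2) : ℝ) : ℂ) *
      ∫ v : E k,
        e (((1 / 2) * (‖w‖ ^ 2 + ‖v‖ ^ 2) * Real.cos φ - ⟪w, v⟫) / Real.sin φ) * f v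

/-- `κ_η(f) = sup_{w,φ} (1+‖w‖²)^{η/2} |f_φ(w)|` (valued in `ℝ≥0∞`). -/
noncomputable def kappa {k : ℕ} (η : ℝ) (f : E k → ℂ) : ℝ≥0∞ :=
  ⨆ (w : E k) (φ : ℝ),
    ENNReal.ofReal ((1 + ‖w‖ ^ 2) ^ (η / 2) * ‖fphi f φ w‖)

/-- The lattice point `n ∈ ℤ^k` viewed as a vector in ℝ^k. -/
noncomputable def intVec {k : ℕ} (n : Fin k → ℤ) : E k :=
  (EuclideanSpace.equiv (Fin k) ℝ).symm (fun i => (n i : ℝ))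

/-- The Jacobi theta function
`Θ_f(z, φ; ξ) = y^{k/4} Σ_{n ∈ ℤ^k} f_φ((n − ξ₂)√y) e(½‖n − ξ₂‖² x + n·ξ₁)`,
where `z = x + iy`. -/
noncomputable def Theta {k : ℕ} (f : E k → ℂ) (z : ℂ) (φ : ℝ) (ξ : E k × E k) : ℂ :=
  ((z.im ^ ((k : ℝ) / 4) : ℝ) : ℂ) *
    ∑' n : Fin k → ℤ,
      fphi f φ (Real.sqrt z.im • (intVec n - ξ.2)) *
        e ((1 / 2) * ‖intVec n - ξ.2‖ ^ 2 * z.re + ⟪intVec n, ξ.1⟫)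

/-!
The finiteness of `κ_η(f)` gives the pointwise decay `|f_φ(w)| ≤ κ_η(f) ‖w‖^{-η}`, and `|e(t)| = 1`,
so away from `n = ξ₂` the terms are at most a constant (depending on `y`) times
`‖n - ξ₂‖^{-η}`. Since `ℤ^k` is a lattice of rank `k` in `ℝ^k`, the shifted lattice sum
`∑ ‖n - ξ₂‖^{-η}` converges for `η > k`.
-/

lemma intVec_injective (k : ℕ) : Function.Injective (intVec (k := k)) := by
  intro m n h
  funext i
  simpa [intVec] using congrArg (· i) h

lemma intVec_mem_span_basisFun {k : ℕ} (n : Fin k → ℤ) :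
    intVec n ∈ Submodule.span ℤ (Set.range (EuclideanSpace.basisFun (Fin k) ℝ).toBasis) :=
  ((EuclideanSpace.basisFun (Fin k) ℝ).toBasis.mem_span_iff_repr_mem ℤ _).mpr
    fun i => ⟨n i, by simp [intVec]⟩

lemma summable_norm_intVec_sub_rpow {k : ℕ} (c : E k) {r : ℝ} (hr : r < -k) :
    Summable fun n : Fin k → ℤ => ‖intVec n - c‖ ^ r := by
  let L := Submodule.span ℤ (Set.range (EuclideanSpace.basisFun (Fin k) ℝ).toBasis)
  have hrank : Module.finrank ℤ L = k := by
    rw [ZLattice.rank ℝ L, finrank_euclideanSpace_fin]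
  have hL : Summable fun z : L => ‖(z : E k) - c‖ ^ r :=
    ZLattice.summable_norm_sub_rpow L r (by rwa [hrank]) c
  let i : (Fin k → ℤ) → L := fun n => ⟨intVec n, intVec_mem_span_basisFun n⟩
  have hi : Function.Injective i := fun m n h => intVec_injective k (congrArg Subtype.val h)
  have hcomp : Summable ((fun z : L => ‖(z : E k) - c‖ ^ r) ∘ i) := hL.comp_injective hi
  exact hcomp

lemma norm_rpow_mul_norm_fphi_le {k : ℕ} {η : ℝ} (hη : 0 ≤ η) {f : E k → ℂ}
    (hκ : kappa η f ≠ ⊤) (φ : ℝ) (w : E k) :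
    ‖w‖ ^ η * ‖fphi f φ w‖ ≤ (kappa η f).toReal := by
  have hle : ENNReal.ofReal ((1 + ‖w‖ ^ 2) ^ (η / 2) * ‖fphi f φ w‖) ≤ kappa η f :=
    le_iSup₂_of_le w φ le_rfl
  rw [ENNReal.ofReal_le_iff_le_toReal hκ] at hle
  refine le_trans ?_ hle
  gcongr
  calc ‖w‖ ^ η = (‖w‖ ^ 2) ^ (η / 2) := by
        rw [← Real.rpow_natCast, ← Real.rpow_mul (norm_nonneg w)]; ring_nf
    _ ≤ (1 + ‖w‖ ^ 2) ^ (η / 2) := by gcongr; linarith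

lemma norm_e (t : ℝ) : ‖e t‖ = 1 := by
  rw [e, Complex.norm_exp]
  simp [Complex.mul_re, Complex.mul_im]

theorem theta_series_summable_general {k : ℕ} (f : E k → ℂ)
    (η : ℝ) (hη : (k : ℝ) < η) (hκ : kappa η f < ⊤)
    (x y : ℝ) (hy : 0 < y) (φ : ℝ) (ξ₁ ξ₂ : E k) :
    Summable (fun n : Fin k → ℤ =>
      ‖fphi f φ (Real.sqrt y • (intVec n - ξ₂)) *
        e ((1 / 2) * ‖intVec n - ξ₂‖ ^ 2 * x + ⟪intVec n, ξ₁⟫)‖) := by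
  have hη0 : 0 < η := lt_of_le_of_lt (Nat.cast_nonneg k) hη
  refine Summable.of_norm_bounded_eventually ((summable_norm_intVec_sub_rpow ξ₂
    (neg_lt_neg hη)).mul_left ((kappa η f).toReal * Real.sqrt y ^ (-η))) ?_
  -- at `intVec n = ξ₂` the bound has the junk value `0 ^ (-η) = 0`, so that point is excluded
  have hfin : {n : Fin k → ℤ | intVec n = ξ₂}.Finite :=
    Set.Subsingleton.finite fun m hm n hn => intVec_injective k (hm.trans hn.symm)
  filter_upwards [hfin.compl_mem_cofinite] with n hn
  have hv : 0 < ‖Real.sqrt y • (intVec n - ξ₂)‖ :=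
    norm_pos_iff.2 (smul_ne_zero (Real.sqrt_pos.2 hy).ne' (sub_ne_zero.2 hn))
  have hdecay := norm_rpow_mul_norm_fphi_le hη0.le hκ.ne φ (Real.sqrt y • (intVec n - ξ₂))
  rw [← le_div_iff₀' (Real.rpow_pos_of_pos hv η)] at hdecay
  rw [norm_norm, norm_mul, norm_e, mul_one]
  refine hdecay.trans_eq ?_
  rw [norm_smul, Real.norm_of_nonneg (Real.sqrt_nonneg y),
    Real.mul_rpow (Real.sqrt_nonneg y) (norm_nonneg _), Real.rpow_neg (Real.sqrt_nonneg y),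
    Real.rpow_neg (norm_nonneg _), div_eq_mul_inv, mul_inv, mul_assoc]

/-- If `κ_η(f) < ∞` for some `η > k`, the theta series converges absolutely at
every point. -/
theorem theta_series_summable {k : ℕ} (hk : 0 < k) (f : E k → ℂ) (hf : Measurable f)
    (η : ℝ) (hη : (k : ℝ) < η) (hκ : kappa η f < ⊤)
    (x y : ℝ) (hy : 0 < y) (φ : ℝ) (ξ₁ ξ₂ : E k) :
    Summable (fun n : Fin k → ℤ =>
      ‖fphi f φ (Real.sqrt y • (intVec n - ξ₂)) *
        e ((1 / 2) * ‖intVec n - ξ₂‖ ^ 2 * x + ⟪intVec n, ξ₁⟫)‖) :=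
  theta_series_summable_general f η hη hκ x y hy φ ξ₁ ξ₂
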